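/- Let {A, B_i, C_i; m} be jointly controllable and jointly observable with a weakly connected neighbor graph and bounded integer transmission delays d_{ij} (with d_{ii}=0, d_i = max over followers). Consider the lifted delay-free extended system {Ã, B̃_i, C̃_i; m} of dimension ñ = n + Σ_i (d_i+1)n_i with shift-register liftings of each local controller state. If the dimension bound n_i ≥ n − min_{s,λ∈σ(A)} rank [λI−A, B_s; C_{m−s}, 0] holds, then a nonzero complex number λ is NOT a fixed eigenvalue of the extended system if and only if N_{m−s} ∩ s ≠ ∅ for every subset s satisfying rank [λI−A, B_s; C_{m−s}, 0] < n. -/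

import Mathlib

open Matrix Complex

noncomputable section

variable {n m : ℕ}

/-- Fixed-mode pencil `[λI − A, B_s; C_{m−s}, 0]` of the original system, in a
rank-equivalent form (zeroed columns/rows instead of deleted ones). -/
def pencil (p q : Fin m → ℕ)
    (A : Matrix (Fin n) (Fin n) ℝ)
    (B : ∀ i, Matrix (Fin n) (Fin (p i)) ℝ)
    (C : ∀ i, Matrix (Fin (q i)) (Fin n) ℝ)
    (lam : ℂ) (s : Finset (Fin m)) :
    Matrix (Fin n ⊕ Σ i, Fin (q i)) (Fin n ⊕ Σ i, Fin (p i)) ℂ :=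
  fromBlocks (lam • 1 - A.map ofReal)
    (fun r c => if c.1 ∈ s then ofReal ((B c.1) r c.2) else 0)
    (fun r c => if r.1 ∈ s then 0 else ofReal ((C r.1) r.2 c))
    0

/-- Index type of the lifted shift registers: agent `j` stores
`z_j(t), z_j(t−1), ..., z_j(t−D j)`. -/
abbrev LiftZ (nd D : Fin m → ℕ) := Σ j : Fin m, Fin (D j + 1) × Fin (nd j)

/-- The lifted `Ã`: block diagonal with `A` and the shift registers. -/
def Alift (nd D : Fin m → ℕ) (A : Matrix (Fin n) (Fin n) ℝ) :
    Matrix (Fin n ⊕ LiftZ nd D) (Fin n ⊕ LiftZ nd D) ℂ :=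
  fromBlocks (A.map ofReal) 0 0
    (fun r c =>
      if h : r.1 = c.1 then
        (if (r.2.1 : ℕ) = (c.2.1 : ℕ) + 1 ∧ h ▸ r.2.2 = c.2.2 then 1 else 0)
      else 0)

/-- The lifted `B̃_i`: injects `u_i` into the plant and `v_i` into the head of
agent `i`'s shift register. -/
def Blift (p nd D : Fin m → ℕ) (B : ∀ i, Matrix (Fin n) (Fin (p i)) ℝ) (i : Fin m) :
    Matrix (Fin n ⊕ LiftZ nd D) (Fin (p i) ⊕ Fin (nd i)) ℂ :=
  fromBlocks ((B i).map ofReal) 0 0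
    (fun r c =>
      if h : r.1 = i then
        (if (r.2.1 : ℕ) = 0 ∧ h ▸ r.2.2 = c then 1 else 0)
      else 0)

/-- The lifted `C̃_i`: outputs `y_i = C_i x` together with, for each neighbor
`j ∈ N i`, the delayed state `z_j(t − del j i)` (register `del j i` in agent
`j`'s shift chain). -/
def Clift (q nd D : Fin m → ℕ) (C : ∀ i, Matrix (Fin (q i)) (Fin n) ℝ)
    (N : Fin m → Finset (Fin m)) (del : Fin m → Fin m → ℕ) (i : Fin m) :
    Matrix (Fin (q i) ⊕ Σ j, Fin (nd j)) (Fin n ⊕ LiftZ nd D) ℂ :=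
  fromBlocks ((C i).map ofReal) 0 0
    (fun r c =>
      if h : c.1 = r.1 then
        (if r.1 ∈ N i ∧ (c.2.1 : ℕ) = del r.1 i ∧ r.2 = h ▸ c.2.2 then 1 else 0)
      else 0)

/-- Fixed-mode pencil of the lifted extended system. -/
def liftPencil (p q nd D : Fin m → ℕ)
    (A : Matrix (Fin n) (Fin n) ℝ)
    (B : ∀ i, Matrix (Fin n) (Fin (p i)) ℝ)
    (C : ∀ i, Matrix (Fin (q i)) (Fin n) ℝ)
    (N : Fin m → Finset (Fin m)) (del : Fin m → Fin m → ℕ)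
    (lam : ℂ) (s : Finset (Fin m)) :
    Matrix ((Fin n ⊕ LiftZ nd D) ⊕ Σ i, (Fin (q i) ⊕ Σ j, Fin (nd j)))
      ((Fin n ⊕ LiftZ nd D) ⊕ Σ i, (Fin (p i) ⊕ Fin (nd i))) ℂ :=
  fromBlocks (lam • 1 - Alift nd D A)
    (fun r c => if c.1 ∈ s then Blift p nd D B c.1 r c.2 else 0)
    (fun r c => if r.1 ∈ s then 0 else Clift q nd D C N del r.1 r.2 c)
    0

end

/-!
Put the shift-register coordinates first. The lifted pencil then has top-left block `λI − S`,
where `S` is the (nilpotent) shift, so for `λ ≠ 0` this block is invertible and the rank is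
`|registers|` plus the rank of the Schur complement. Since agent `i` reads register `d j i` of
each neighbour `j`, after permuting rows and columns the Schur complement is block diagonal with
blocks the original pencil `[λI − A, B_s; C_{m−s}, 0]` and a matrix `G_s` whose only nonzero
entries are `−λ^{-(d j i + 1)}` for `i ∉ s`, `j ∈ s`, `j ∈ N i`. So
`rank (lifted pencil) = Σ (D i + 1) n_i + rank pencil + rank G_s`.
If no follower outside `s` listens to an agent in `s`, then `G_s = 0` and a rank defect of the
pencil survives. Otherwise `G_s` contains an invertible diagonal `n_j × n_j` block, and the
dimension bound (or, off the spectrum of `A`, the invertibility of `λI − A`) fills the defect.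
-/

section BlockRank

variable {K : Type*} [Field K] {α β γ δ : Type*} [Fintype α] [Fintype β] [Fintype γ] [Fintype δ]

theorem Submodule.finrank_prod {M M' : Type*} [AddCommGroup M] [AddCommGroup M']
    [Module K M] [Module K M'] [FiniteDimensional K M] [FiniteDimensional K M']
    (p : Submodule K M) (p' : Submodule K M') :
    Module.finrank K (p.prod p') = Module.finrank K p + Module.finrank K p' := by
  have h := LinearMap.finrank_range_of_inj (f := p.subtype.prodMap p'.subtype)
    (Prod.map_injective.mpr ⟨p.injective_subtype, p'.injective_subtype⟩)
  rwa [LinearMap.range_prodMap, Submodule.range_subtype, Submodule.range_subtype,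
    Module.finrank_prod] at h

theorem Matrix.rank_fromBlocks_zero_zero (A : Matrix α β K) (D : Matrix γ δ K) :
    (fromBlocks A 0 0 D).rank = A.rank + D.rank := by
  classical
  have h : (fromBlocks A 0 0 D).mulVecLin =
      (LinearEquiv.sumArrowLequivProdArrow α γ K K).symm.toLinearMap ∘ₗ
        (A.mulVecLin.prodMap D.mulVecLin) ∘ₗ
          (LinearEquiv.sumArrowLequivProdArrow β δ K K).toLinearMap := by
    refine LinearMap.ext fun x => funext fun i => ?_
    cases i <;> simp [fromBlocks_mulVec, LinearEquiv.sumArrowLequivProdArrow,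
      Equiv.sumArrowEquivProdArrow]
  rw [rank, h, LinearMap.range_comp, LinearMap.range_comp, LinearEquiv.range, Submodule.map_top,
    LinearMap.range_prodMap, LinearEquiv.finrank_map_eq, Submodule.finrank_prod, rank, rank]

theorem Matrix.rank_fromBlocks_of_isUnit_of_mul_eq [DecidableEq α] {M : Matrix α α K}
    (hM : IsUnit M) {B : Matrix α δ K} (C : Matrix γ α K) (D : Matrix γ δ K)
    {X : Matrix α δ K} (hX : M * X = B) :
    (fromBlocks M B C D).rank = Fintype.card α + (D - C * X).rank := by
  classical
  let := hM.invertible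
  have hX' : ⅟M * B = X := by rw [← hX, Matrix.invOf_mul_cancel_left]
  rw [fromBlocks_eq_of_invertible₁₁, rank_mul_eq_left_of_isUnit_det _ _ (by simp),
    rank_mul_eq_right_of_isUnit_det _ _ (by simp), rank_fromBlocks_zero_zero,
    rank_of_isUnit M hM, Matrix.mul_assoc, hX']

end BlockRank

def Equiv.sumRotate (α β γ : Type*) : (α ⊕ β) ⊕ γ ≃ β ⊕ (α ⊕ γ) :=
  ((Equiv.sumComm α β).sumCongr (Equiv.refl γ)).trans (Equiv.sumAssoc β α γ)

def Equiv.sumSigmaSumDistrib {ι : Type*} (α : Type*) (β γ : ι → Type*) :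
    α ⊕ (Σ i, β i ⊕ γ i) ≃ (α ⊕ Σ i, β i) ⊕ Σ i, γ i :=
  ((Equiv.refl α).sumCongr (Equiv.sigmaSumDistrib β γ)).trans (Equiv.sumAssoc _ _ _).symm

section SumSigmaSumDistrib

variable {ι α : Type*} {β γ : ι → Type*}

@[simp]
theorem Equiv.sumSigmaSumDistrib_symm_apply_inl_inl (a : α) :
    (Equiv.sumSigmaSumDistrib α β γ).symm (.inl (.inl a)) = .inl a := rfl

@[simp]
theorem Equiv.sumSigmaSumDistrib_symm_apply_inl_inr (i : ι) (b : β i) :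
    (Equiv.sumSigmaSumDistrib α β γ).symm (.inl (.inr ⟨i, b⟩)) = .inr ⟨i, .inl b⟩ := rfl

@[simp]
theorem Equiv.sumSigmaSumDistrib_symm_apply_inr (i : ι) (c : γ i) :
    (Equiv.sumSigmaSumDistrib α β γ).symm (.inr ⟨i, c⟩) = .inr ⟨i, .inr c⟩ := rfl

end SumSigmaSumDistrib

section ShiftRegister

variable {m : ℕ} (nd D : Fin m → ℕ)

def shiftMatrix : Matrix (LiftZ nd D) (LiftZ nd D) ℂ := fun r c =>
  if h : r.1 = c.1 then
    (if (r.2.1 : ℕ) = (c.2.1 : ℕ) + 1 ∧ h ▸ r.2.2 = c.2.2 then 1 else 0)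
  else 0

theorem Alift_eq_fromBlocks {n : ℕ} (A : Matrix (Fin n) (Fin n) ℝ) :
    Alift nd D A = fromBlocks (A.map ofReal) 0 0 (shiftMatrix nd D) := rfl

variable {nd D}

theorem shiftMatrix_apply_head (j : Fin m) (r : Fin (nd j)) (c : LiftZ nd D) :
    shiftMatrix nd D ⟨j, 0, r⟩ c = 0 := by
  simp [shiftMatrix]

theorem shiftMatrix_apply_succ (j : Fin m) (a : Fin (D j)) (r : Fin (nd j)) (c : LiftZ nd D) :
    shiftMatrix nd D ⟨j, a.succ, r⟩ c = if c = ⟨j, a.castSucc, r⟩ then 1 else 0 := by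
  obtain ⟨j', b, r'⟩ := c
  by_cases hj : j = j'
  · subst hj
    simp [shiftMatrix, Fin.ext_iff, eq_comm]
  · simp [shiftMatrix, hj, Ne.symm hj]

theorem shiftMatrix_mulVec_apply_head (v : LiftZ nd D → ℂ) (j : Fin m) (r : Fin (nd j)) :
    (shiftMatrix nd D *ᵥ v) ⟨j, 0, r⟩ = 0 := by
  simp [mulVec, dotProduct, shiftMatrix_apply_head]

theorem shiftMatrix_mulVec_apply_succ (v : LiftZ nd D → ℂ) (j : Fin m) (a : Fin (D j))
    (r : Fin (nd j)) : (shiftMatrix nd D *ᵥ v) ⟨j, a.succ, r⟩ = v ⟨j, a.castSucc, r⟩ := by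
  simp [mulVec, dotProduct, shiftMatrix_apply_succ]

theorem shiftMatrix_mul_apply_head {ι : Type*} (X : Matrix (LiftZ nd D) ι ℂ) (j : Fin m)
    (r : Fin (nd j)) (c : ι) : (shiftMatrix nd D * X) ⟨j, 0, r⟩ c = 0 :=
  shiftMatrix_mulVec_apply_head (fun w => X w c) j r

theorem shiftMatrix_mul_apply_succ {ι : Type*} (X : Matrix (LiftZ nd D) ι ℂ) (j : Fin m)
    (a : Fin (D j)) (r : Fin (nd j)) (c : ι) :
    (shiftMatrix nd D * X) ⟨j, a.succ, r⟩ c = X ⟨j, a.castSucc, r⟩ c :=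
  shiftMatrix_mulVec_apply_succ (fun w => X w c) j a r

theorem isUnit_smul_one_sub_shiftMatrix {lam : ℂ} (hlam : lam ≠ 0) :
    IsUnit (lam • 1 - shiftMatrix nd D) := by
  rw [← mulVec_injective_iff_isUnit]
  refine (injective_iff_map_eq_zero (mulVecLin _)).mpr fun v hv => ?_
  have hv' (z : LiftZ nd D) : lam * v z = (shiftMatrix nd D *ᵥ v) z := by
    have := congrFun hv z
    simp only [mulVecLin_apply, sub_mulVec, smul_mulVec, one_mulVec] at this
    exact sub_eq_zero.mp this
  ext ⟨j, a, r⟩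
  induction a using Fin.induction with
  | zero =>
    simpa [hlam, shiftMatrix_mulVec_apply_head] using hv' ⟨j, 0, r⟩
  | succ a ih =>
    simpa [hlam, shiftMatrix_mulVec_apply_succ, ih] using hv' ⟨j, a.succ, r⟩

end ShiftRegister

noncomputable section LiftedPencil

variable {n m : ℕ} (p q nd D : Fin m → ℕ) (A : Matrix (Fin n) (Fin n) ℝ)
  (B : ∀ i, Matrix (Fin n) (Fin (p i)) ℝ) (C : ∀ i, Matrix (Fin (q i)) (Fin n) ℝ)
  (N : Fin m → Finset (Fin m)) (d : Fin m → Fin m → ℕ) (lam : ℂ) (s : Finset (Fin m))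

def liftPencilRegistersFirst :
    Matrix (LiftZ nd D ⊕ (Fin n ⊕ Σ i, (Fin (q i) ⊕ Σ j, Fin (nd j))))
      (LiftZ nd D ⊕ (Fin n ⊕ Σ i, (Fin (p i) ⊕ Fin (nd i)))) ℂ :=
  reindex (Equiv.sumRotate _ _ _) (Equiv.sumRotate _ _ _) (liftPencil p q nd D A B C N d lam s)

/-- The solution `X` of `(λI − S) X = B̃_s`: an input `v_i` injected at the head of agent `i`'s
register chain reaches register `k` with gain `λ^{-(k+1)}`. -/
def registerResponse :
    Matrix (LiftZ nd D) (Fin n ⊕ Σ i, (Fin (p i) ⊕ Fin (nd i))) ℂ := of fun z c =>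
  match c with
  | .inr ⟨i, .inr v⟩ =>
    if i ∈ s ∧ (⟨z.1, z.2.2⟩ : Σ k, Fin (nd k)) = ⟨i, v⟩ then lam⁻¹ ^ ((z.2.1 : ℕ) + 1) else 0
  | _ => 0

/-- Row `⟨i, j, r⟩` is agent `i`'s measurement of coordinate `r` of neighbour `j`'s register,
column `⟨j, r⟩` the corresponding input `v_j`. -/
def delayCoupling : Matrix (Σ _i : Fin m, Σ j, Fin (nd j)) (Σ i, Fin (nd i)) ℂ := of fun r c =>
  if r.1 ∉ s ∧ r.2.1 ∈ s ∧ r.2.1 ∈ N r.1 ∧ r.2 = c then -lam⁻¹ ^ (d r.2.1 r.1 + 1) else 0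

variable {p q nd D A B C N d lam s}

theorem liftPencilRegistersFirst_toBlocks₁₁ :
    (liftPencilRegistersFirst p q nd D A B C N d lam s).toBlocks₁₁ =
      lam • 1 - shiftMatrix nd D := by
  ext z z'
  simp [liftPencilRegistersFirst, Equiv.sumRotate, liftPencil, Alift_eq_fromBlocks, toBlocks₁₁,
    one_apply, fromBlocks]

theorem smul_one_sub_shiftMatrix_mul_registerResponse (hlam : lam ≠ 0) :
    (lam • 1 - shiftMatrix nd D) * registerResponse (n := n) p nd D lam s =
      (liftPencilRegistersFirst p q nd D A B C N d lam s).toBlocks₁₂ := by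
  rw [Matrix.sub_mul, Matrix.smul_mul, Matrix.one_mul]
  ext ⟨j, a, r⟩ c
  rw [Matrix.sub_apply, Matrix.smul_apply]
  cases a using Fin.cases with
  | zero =>
    rw [shiftMatrix_mul_apply_head]
    rcases c with x | ⟨i, u | v⟩ <;> simp [registerResponse, liftPencilRegistersFirst,
      Equiv.sumRotate, liftPencil, Alift, Blift, toBlocks₁₂, fromBlocks, hlam]
    by_cases hji : j = i
    · subst hji
      simp [ite_and]
    · simp [hji]
  | succ a =>
    rw [shiftMatrix_mul_apply_succ]
    rcases c with x | ⟨i, u | v⟩ <;> simp [registerResponse, liftPencilRegistersFirst,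
      Equiv.sumRotate, liftPencil, Alift, Blift, toBlocks₁₂, fromBlocks]
    split_ifs
    · field_simp
      ring
    · simp

theorem Clift_apply_inr_inr {i j : Fin m} (hj : j ∈ N i) (hd : d j i < D j + 1)
    (r : Fin (nd j)) (w : LiftZ nd D) :
    Clift (n := n) q nd D C N d i (.inr ⟨j, r⟩) (.inr w) =
      if w = ⟨j, ⟨d j i, hd⟩, r⟩ then 1 else 0 := by
  obtain ⟨j', b, r'⟩ := w
  by_cases hj' : j' = j
  · subst hj'
    simp [Clift, fromBlocks, hj, Fin.ext_iff, eq_comm]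
  · simp [Clift, fromBlocks, hj']

theorem Clift_apply_inr_inr_of_notMem {i j : Fin m} (hj : j ∉ N i) (r : Fin (nd j))
    (w : LiftZ nd D) : Clift (n := n) q nd D C N d i (.inr ⟨j, r⟩) (.inr w) = 0 := by
  simp [Clift, fromBlocks, hj]

theorem toBlocks₂₁_mul_registerResponse_apply (hD : ∀ i j, i ∈ N j → d i j ≤ D i)
    (i j : Fin m) (r : Fin (nd j)) (c : Fin n ⊕ Σ i, (Fin (p i) ⊕ Fin (nd i))) :
    ((liftPencilRegistersFirst p q nd D A B C N d lam s).toBlocks₂₁ *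
      registerResponse p nd D lam s) (.inr ⟨i, .inr ⟨j, r⟩⟩) c =
      if h : i ∉ s ∧ j ∈ N i then
        registerResponse p nd D lam s ⟨j, ⟨d j i, Nat.lt_succ_of_le (hD j i h.2)⟩, r⟩ c
      else 0 := by
  rw [mul_apply]
  split_ifs with h
  · simp [liftPencilRegistersFirst, Equiv.sumRotate, liftPencil, toBlocks₂₁, h.1, fromBlocks,
      Clift_apply_inr_inr h.2 (Nat.lt_succ_of_le (hD j i h.2))]
  · refine Finset.sum_eq_zero fun w _ => ?_
    by_cases hi : i ∈ s
    · simp [liftPencilRegistersFirst, Equiv.sumRotate, liftPencil, toBlocks₂₁, hi, fromBlocks]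
    · simp [liftPencilRegistersFirst, Equiv.sumRotate, liftPencil, toBlocks₂₁, hi, fromBlocks,
        Clift_apply_inr_inr_of_notMem fun hj => h ⟨hi, hj⟩]

theorem reindex_schurComplement_eq_fromBlocks (hD : ∀ i j, i ∈ N j → d i j ≤ D i) :
    reindex (Equiv.sumSigmaSumDistrib _ _ _) (Equiv.sumSigmaSumDistrib _ _ _)
      ((liftPencilRegistersFirst p q nd D A B C N d lam s).toBlocks₂₂ -
        (liftPencilRegistersFirst p q nd D A B C N d lam s).toBlocks₂₁ *
          registerResponse p nd D lam s) =
      fromBlocks (pencil p q A B C lam s) 0 0 (delayCoupling nd N d lam s) := by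
  ext ((x | ⟨i, y⟩) | ⟨i, j, r⟩) ((x' | ⟨i', u⟩) | ⟨i', v⟩)
  all_goals simp only [reindex_apply, submatrix_apply, Matrix.sub_apply,
    Equiv.sumSigmaSumDistrib_symm_apply_inl_inl, Equiv.sumSigmaSumDistrib_symm_apply_inl_inr,
    Equiv.sumSigmaSumDistrib_symm_apply_inr, fromBlocks_apply₁₁, fromBlocks_apply₁₂,
    fromBlocks_apply₂₁, fromBlocks_apply₂₂, Matrix.zero_apply,
    toBlocks₂₁_mul_registerResponse_apply hD]
  all_goals simp [mul_apply, liftPencilRegistersFirst, Equiv.sumRotate, liftPencil, Alift, Blift,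
    Clift, toBlocks₂₁, toBlocks₂₂, fromBlocks, pencil, registerResponse, delayCoupling, one_apply]
  by_cases hjv : (⟨j, r⟩ : Σ k, Fin (nd k)) = ⟨i', v⟩
  · cases hjv
    by_cases hi : i ∈ s <;> by_cases hj : j ∈ N i <;> by_cases hjs : j ∈ s <;>
      simp [hi, hj, hjs]
  · simp [hjv]

theorem rank_liftPencil (hlam : lam ≠ 0) (hD : ∀ i j, i ∈ N j → d i j ≤ D i) :
    (liftPencil p q nd D A B C N d lam s).rank =
      ∑ i, (D i + 1) * nd i +
        ((pencil p q A B C lam s).rank + (delayCoupling nd N d lam s).rank) := by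
  set M := liftPencilRegistersFirst p q nd D A B C N d lam s
  have hM₁₁ : M.toBlocks₁₁ = lam • 1 - shiftMatrix nd D := liftPencilRegistersFirst_toBlocks₁₁
  have hX : M.toBlocks₁₁ * registerResponse p nd D lam s = M.toBlocks₁₂ := by
    rw [hM₁₁, smul_one_sub_shiftMatrix_mul_registerResponse hlam]
  rw [← rank_reindex (Equiv.sumRotate _ _ _) (Equiv.sumRotate _ _ _),
    show reindex _ _ _ = M from rfl, ← fromBlocks_toBlocks M,
    rank_fromBlocks_of_isUnit_of_mul_eq (hM₁₁ ▸ isUnit_smul_one_sub_shiftMatrix hlam) _ _ hX,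
    ← rank_reindex (Equiv.sumSigmaSumDistrib _ _ _) (Equiv.sumSigmaSumDistrib _ _ _),
    reindex_schurComplement_eq_fromBlocks hD, rank_fromBlocks_zero_zero]
  simp [Fintype.card_sigma]

theorem delayCoupling_eq_zero (h : ¬((sᶜ.biUnion N) ∩ s).Nonempty) :
    delayCoupling nd N d lam s = 0 := by
  ext ⟨i, j, r⟩ c
  refine if_neg fun ⟨hi, hj, hji, _⟩ => h ⟨j, ?_⟩
  simpa [hj] using ⟨i, hi, hji⟩

theorem le_rank_delayCoupling (hlam : lam ≠ 0) {i j : Fin m} (hi : i ∉ s) (hj : j ∈ s)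
    (hji : j ∈ N i) : nd j ≤ (delayCoupling nd N d lam s).rank := by
  have hsub : (delayCoupling nd N d lam s).submatrix
      (fun r : Fin (nd j) => (⟨i, j, r⟩ : Σ _i : Fin m, Σ j, Fin (nd j)))
      (fun r : Fin (nd j) => (⟨j, r⟩ : Σ j, Fin (nd j))) =
      diagonal fun _ => -lam⁻¹ ^ (d j i + 1) := by
    ext r r'
    by_cases hr : r = r' <;> simp [delayCoupling, diagonal, hi, hj, hji, hr]
  calc nd j = (diagonal fun _ : Fin (nd j) => -lam⁻¹ ^ (d j i + 1)).rank := by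
        simp [rank_diagonal, hlam]
    _ ≤ _ := hsub ▸ rank_submatrix_le _ _ _

end LiftedPencil

theorem le_rank_pencil {n m : ℕ} (p q : Fin m → ℕ) (A : Matrix (Fin n) (Fin n) ℝ)
    (B : ∀ i, Matrix (Fin n) (Fin (p i)) ℝ) (C : ∀ i, Matrix (Fin (q i)) (Fin n) ℝ) {lam : ℂ}
    (s : Finset (Fin m)) (hlam : lam ∉ spectrum ℂ (A.map ofReal)) :
    n ≤ (pencil p q A B C lam s).rank := by
  have hU : IsUnit (lam • (1 : Matrix (Fin n) (Fin n) ℂ) - A.map ofReal) := by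
    simpa [Algebra.algebraMap_eq_smul_one] using spectrum.notMem_iff.mp hlam
  calc n = (lam • (1 : Matrix (Fin n) (Fin n) ℂ) - A.map ofReal).rank := by
        simp [rank_of_isUnit _ hU]
    _ ≤ _ := rank_submatrix_le (pencil p q A B C lam s) Sum.inl Sum.inl

theorem stmt16_general {n m : ℕ} (p q nd : Fin m → ℕ)
    (A : Matrix (Fin n) (Fin n) ℝ)
    (B : ∀ i, Matrix (Fin n) (Fin (p i)) ℝ)
    (C : ∀ i, Matrix (Fin (q i)) (Fin n) ℝ)
    (N : Fin m → Finset (Fin m))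
    (d : Fin m → Fin m → ℕ) (D : Fin m → ℕ)
    -- `D i` is the maximum of `d i j` over the followers `j` of `i`
    (hDub : ∀ i j, i ∈ N j → d i j ≤ D i)
    -- n_i ≥ n − min_{s, λ ∈ σ(A)} rank [λI − A, B_s; C_{m−s}, 0]
    (hbound : ∀ i, ∀ (s : Finset (Fin m)) (lam : ℂ),
      lam ∈ spectrum ℂ (A.map Complex.ofReal) →
      n - (pencil p q A B C lam s).rank ≤ nd i) :
    ∀ lam : ℂ, lam ≠ 0 →
      ((∀ s : Finset (Fin m),
          n + ∑ i, (D i + 1) * nd i ≤ (liftPencil p q nd D A B C N d lam s).rank) ↔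
        ∀ s : Finset (Fin m),
          (pencil p q A B C lam s).rank < n → (((sᶜ).biUnion N) ∩ s).Nonempty) := by
  intro lam hlam
  simp_rw [rank_liftPencil hlam hDub]
  refine ⟨fun hlift s hs => ?_, fun hedge s => ?_⟩
  · by_contra hno
    have := hlift s
    rw [delayCoupling_eq_zero hno, rank_zero] at this
    omega
  · by_cases hs : (pencil p q A B C lam s).rank < n
    · obtain ⟨j, hj⟩ := hedge s hs
      obtain ⟨hj, hjs⟩ := Finset.mem_inter.mp hj
      obtain ⟨i, hi, hji⟩ := Finset.mem_biUnion.mp hj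
      have hG := le_rank_delayCoupling (nd := nd) (d := d) hlam (Finset.mem_compl.mp hi) hjs hji
      by_cases hσ : lam ∈ spectrum ℂ (A.map Complex.ofReal)
      · have := hbound j s lam hσ
        omega
      · have := le_rank_pencil p q A B C s hσ
        omega
    · omega

/-- For a jointly controllable, jointly observable system with a weakly
connected neighbor graph and bounded transmission delays `d i j` (with
`d i i = 0` and `D i` the maximum delay over agent `i`'s followers), if the
integrator dimensions satisfy the lower bound, then a **nonzero** complex `λ`
is not a fixed eigenvalue of the lifted extended system if and only if
`N_{m−s} ∩ s ≠ ∅` for every subset `s` with `rank [λI − A, B_s; C_{m−s}, 0] < n`. -/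
theorem stmt16 {n m : ℕ} (p q nd : Fin m → ℕ)
    (A : Matrix (Fin n) (Fin n) ℝ)
    (B : ∀ i, Matrix (Fin n) (Fin (p i)) ℝ)
    (C : ∀ i, Matrix (Fin (q i)) (Fin n) ℝ)
    (N : Fin m → Finset (Fin m))
    (d : Fin m → Fin m → ℕ) (D : Fin m → ℕ)
    (hself : ∀ i, i ∈ N i)
    (hdii : ∀ i, d i i = 0)
    -- `D i` is the maximum of `d i j` over the followers `j` of `i`
    (hDub : ∀ i j, i ∈ N j → d i j ≤ D i)
    (hDatt : ∀ i, ∃ j, i ∈ N j ∧ d i j = D i)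
    -- weakly connected neighbor graph
    (hwc : ∀ i j, Relation.ReflTransGen (fun a b => a ∈ N b ∨ b ∈ N a) i j)
    -- joint controllability and joint observability
    (hctrb : ∀ lam : ℂ, (pencil p q A B C lam Finset.univ).rank = n)
    (hobs : ∀ lam : ℂ, (pencil p q A B C lam ∅).rank = n)
    -- n_i ≥ n − min_{s, λ ∈ σ(A)} rank [λI − A, B_s; C_{m−s}, 0]
    (hbound : ∀ i, ∀ (s : Finset (Fin m)) (lam : ℂ),
      lam ∈ spectrum ℂ (A.map Complex.ofReal) →
      n - (pencil p q A B C lam s).rank ≤ nd i) :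
    ∀ lam : ℂ, lam ≠ 0 →
      ((∀ s : Finset (Fin m),
          n + ∑ i, (D i + 1) * nd i ≤ (liftPencil p q nd D A B C N d lam s).rank) ↔
        ∀ s : Finset (Fin m),
          (pencil p q A B C lam s).rank < n → (((sᶜ).biUnion N) ∩ s).Nonempty) :=
  stmt16_general p q nd A B C N d D hDub hbound
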